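/- arXiv:2603.01365 — 2 statements merged into one kernel-verified Lean document; each statement's English description precedes it below -/
import Mathlib

section
/- The ℓ1 distance between discounted state visitation distributions of two policies is bounded: ‖d^{π'} − d^π‖_1 ≤ (2γ/(1−γ)) · E_{s∼d^π}[D_TV(π'(·|s) ‖ π(·|s))], where D_TV(π'‖π)[s] = (1/2) Σ_{a∈A} |π'(a|s) − π(a|s)|. -/
open Finset

noncomputable section

variable {S A : Type*} [Fintype S] [Fintype A] [DecidableEq S]

/-- A policy assigns a probability distribution over actions to each state. -/
def IsPolicy (p : S → A → ℝ) : Prop :=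
  (∀ s a, 0 ≤ p s a) ∧ ∀ s, ∑ a, p s a = 1

/-- A finite Markov decision process with discount factor `γ ∈ [0,1)`. -/
structure FinMDP (S A : Type*) [Fintype S] [Fintype A] where
  P : S → A → S → ℝ
  P_nonneg : ∀ s a s', 0 ≤ P s a s'
  P_sum : ∀ s a, ∑ s', P s a s' = 1
  r : S → A → ℝ
  μ : S → ℝ
  μ_nonneg : ∀ s, 0 ≤ μ s
  μ_sum : ∑ s, μ s = 1
  γ : ℝ
  γ_nonneg : 0 ≤ γ
  γ_lt_one : γ < 1

/-- One step of the state-distribution evolution under a policy. -/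
def stepDist (M : FinMDP S A) (π : S → A → ℝ) (d : S → ℝ) : S → ℝ :=
  fun s' => ∑ s, ∑ a, d s * π s a * M.P s a s'

/-- Distribution of the state at time `t`, starting from `μ`, following `π`. -/
def stateDist (M : FinMDP S A) (π : S → A → ℝ) : ℕ → S → ℝ
  | 0 => M.μ
  | t + 1 => stepDist M π (stateDist M π t)

/-- Expected discounted return `J(π)` with initial distribution `μ`. -/
def Jret (M : FinMDP S A) (π : S → A → ℝ) : ℝ :=
  ∑' t : ℕ, M.γ ^ t * ∑ s, stateDist M π t s * ∑ a, π s a * M.r s a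

/-- Discounted future state visitation distribution `d^π`. -/
def dVisit (M : FinMDP S A) (π : S → A → ℝ) (s : S) : ℝ :=
  (1 - M.γ) * ∑' t : ℕ, M.γ ^ t * stateDist M π t s

/-- Distribution of the state at time `t` starting deterministically from `s₀`. -/
def stateDistFrom (M : FinMDP S A) (π : S → A → ℝ) (s₀ : S) : ℕ → S → ℝ
  | 0 => fun s => if s = s₀ then 1 else 0
  | t + 1 => stepDist M π (stateDistFrom M π s₀ t)

/-- State value function `V_π(s₀)`: expected discounted return starting from `s₀`. -/
def Vval (M : FinMDP S A) (π : S → A → ℝ) (s₀ : S) : ℝ :=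
  ∑' t : ℕ, M.γ ^ t * ∑ s, stateDistFrom M π s₀ t s * ∑ a, π s a * M.r s a

/-- State-action value function `Q_π(s,a)`. -/
def Qval (M : FinMDP S A) (π : S → A → ℝ) (s : S) (a : A) : ℝ :=
  M.r s a + M.γ * ∑ s', M.P s a s' * Vval M π s'

/-- Advantage function `A_π(s,a) = Q_π(s,a) - V_π(s)`. -/
def Adv (M : FinMDP S A) (π : S → A → ℝ) (s : S) (a : A) : ℝ :=
  Qval M π s a - Vval M π s

/-- Total variation distance between two distributions over actions. -/
def DTV (p q : A → ℝ) : ℝ := (1 / 2) * ∑ a, |p a - q a|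

/-- KL divergence between two distributions over actions. -/
def DKL (p q : A → ℝ) : ℝ := ∑ a, p a * Real.log (p a / q a)

lemma sum_step (M : FinMDP S A) (f : S → A → ℝ) :
    ∑ s', ∑ s, ∑ a, f s a * M.P s a s' = ∑ s, ∑ a, f s a := by
  rw [Finset.sum_comm]
  refine Finset.sum_congr rfl fun s _ => ?_
  rw [Finset.sum_comm]
  refine Finset.sum_congr rfl fun a _ => ?_
  rw [← Finset.mul_sum, M.P_sum, mul_one]

lemma stateDist_nonneg (M : FinMDP S A) (π : S → A → ℝ) (hπ : IsPolicy π) :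
    ∀ t s, 0 ≤ stateDist M π t s := by
  intro t
  induction t with
  | zero => exact M.μ_nonneg
  | succ t ih =>
    intro s
    refine Finset.sum_nonneg fun s' _ => Finset.sum_nonneg fun a _ => ?_
    exact mul_nonneg (mul_nonneg (ih s') (hπ.1 s' a)) (M.P_nonneg s' a s)

lemma stateDist_sum (M : FinMDP S A) (π : S → A → ℝ) (hπ : IsPolicy π) :
    ∀ t, ∑ s, stateDist M π t s = 1 := by
  intro t
  induction t with
  | zero => exact M.μ_sum
  | succ t ih =>
    show ∑ s', ∑ s, ∑ a, stateDist M π t s * π s a * M.P s a s' = 1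
    rw [sum_step]
    simp only [← Finset.mul_sum, hπ.2, mul_one, ih]

lemma stateDist_le_one (M : FinMDP S A) (π : S → A → ℝ) (hπ : IsPolicy π) (t : ℕ) (s : S) :
    stateDist M π t s ≤ 1 := by
  calc stateDist M π t s ≤ ∑ s, stateDist M π t s :=
        Finset.single_le_sum (fun s' _ => stateDist_nonneg M π hπ t s') (Finset.mem_univ s)
    _ = 1 := stateDist_sum M π hπ t

lemma summable_stateDist (M : FinMDP S A) (π : S → A → ℝ) (hπ : IsPolicy π) (s : S) :
    Summable (fun t => M.γ ^ t * stateDist M π t s) := by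
  refine Summable.of_nonneg_of_le
    (fun t => mul_nonneg (pow_nonneg M.γ_nonneg t) (stateDist_nonneg M π hπ t s))
    (fun t => ?_) (summable_geometric_of_lt_one M.γ_nonneg M.γ_lt_one)
  calc M.γ ^ t * stateDist M π t s ≤ M.γ ^ t * 1 :=
        mul_le_mul_of_nonneg_left (stateDist_le_one M π hπ t s) (pow_nonneg M.γ_nonneg t)
    _ = M.γ ^ t := mul_one _

lemma dVisit_nonneg (M : FinMDP S A) (π : S → A → ℝ) (hπ : IsPolicy π) (s : S) :
    0 ≤ dVisit M π s := by
  refine mul_nonneg (by linarith [M.γ_lt_one]) (tsum_nonneg fun t => ?_)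
  exact mul_nonneg (pow_nonneg M.γ_nonneg t) (stateDist_nonneg M π hπ t s)

lemma stepDist_dVisit (M : FinMDP S A) (π : S → A → ℝ) (hπ : IsPolicy π) (s' : S) :
    stepDist M π (dVisit M π) s'
      = (1 - M.γ) * ∑' t : ℕ, M.γ ^ t * stepDist M π (stateDist M π t) s' := by
  have hsum : ∀ s a, Summable (fun t : ℕ =>
      (1 - M.γ) * (M.γ ^ t * (stateDist M π t s * π s a * M.P s a s'))) := by
    intro s a
    refine (((summable_stateDist M π hπ s).mul_left (1 - M.γ)).mul_right
      (π s a * M.P s a s')).congr fun t => by ring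
  unfold stepDist dVisit
  have h1 : ∀ s a, ((1 - M.γ) * ∑' t : ℕ, M.γ ^ t * stateDist M π t s) * π s a * M.P s a s'
      = ∑' t : ℕ, (1 - M.γ) * (M.γ ^ t * (stateDist M π t s * π s a * M.P s a s')) := by
    intro s a
    rw [mul_assoc, ← tsum_mul_left, ← tsum_mul_right]
    exact tsum_congr fun t => by ring
  simp only [h1]
  have h2 : ∀ s, ∑ a, ∑' t : ℕ,
        (1 - M.γ) * (M.γ ^ t * (stateDist M π t s * π s a * M.P s a s'))
      = ∑' t : ℕ, ∑ a, (1 - M.γ) * (M.γ ^ t * (stateDist M π t s * π s a * M.P s a s')) :=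
    fun s => (Summable.tsum_finsetSum fun a _ => hsum s a).symm
  simp only [h2]
  rw [← Summable.tsum_finsetSum fun s _ => summable_sum fun a _ => hsum s a, ← tsum_mul_left]
  refine tsum_congr fun t => ?_
  show _ = (1 - M.γ) * (M.γ ^ t * ∑ s, ∑ a, stateDist M π t s * π s a * M.P s a s')
  simp only [Finset.mul_sum]

lemma dVisit_fixed (M : FinMDP S A) (π : S → A → ℝ) (hπ : IsPolicy π) (s' : S) :
    dVisit M π s' = (1 - M.γ) * M.μ s' + M.γ * stepDist M π (dVisit M π) s' := by
  rw [stepDist_dVisit M π hπ s']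
  have hs : Summable (fun t => M.γ ^ t * stateDist M π t s') := summable_stateDist M π hπ s'
  unfold dVisit
  rw [Summable.tsum_eq_zero_add hs]
  have h : ∀ t : ℕ, M.γ ^ (t + 1) * stateDist M π (t + 1) s'
      = M.γ * (M.γ ^ t * stepDist M π (stateDist M π t) s') := by
    intro t
    show M.γ ^ (t + 1) * stepDist M π (stateDist M π t) s' = _
    ring
  have h2 : (∑' n : ℕ, M.γ ^ (n + 1) * stateDist M π (n + 1) s')
      = M.γ * ∑' t : ℕ, M.γ ^ t * stepDist M π (stateDist M π t) s' := by
    rw [← tsum_mul_left]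
    exact tsum_congr h
  rw [h2]
  show (1 - M.γ) * (M.γ ^ 0 * M.μ s' + M.γ * _) = _
  ring

lemma stepDist_l1 (M : FinMDP S A) (π : S → A → ℝ) (hπ : IsPolicy π) (h : S → ℝ) :
    ∑ s', |stepDist M π h s'| ≤ ∑ s, |h s| := by
  have key : ∑ s', ∑ s, ∑ a, |h s| * π s a * M.P s a s' = ∑ s, |h s| := by
    rw [sum_step]
    simp only [← Finset.mul_sum, hπ.2, mul_one]
  calc ∑ s', |stepDist M π h s'|
      ≤ ∑ s', ∑ s, ∑ a, |h s| * π s a * M.P s a s' := by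
        refine Finset.sum_le_sum fun s' _ => ?_
        refine (Finset.abs_sum_le_sum_abs _ _).trans (Finset.sum_le_sum fun s _ => ?_)
        refine (Finset.abs_sum_le_sum_abs _ _).trans (Finset.sum_le_sum fun a _ => ?_)
        rw [abs_mul, abs_mul, abs_of_nonneg (hπ.1 s a), abs_of_nonneg (M.P_nonneg s a s')]
    _ = ∑ s, |h s| := key

/-- ℓ¹ bound between discounted state visitation distributions (Achiam et al.). -/
theorem visitation_l1_bound (M : FinMDP S A) (π' π : S → A → ℝ)
    (hπ' : IsPolicy π') (hπ : IsPolicy π) :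
    ∑ s, |dVisit M π' s - dVisit M π s| ≤
      (2 * M.γ / (1 - M.γ)) * ∑ s, dVisit M π s * DTV (π' s) (π s) := by
  set f := dVisit M π' with hf
  set g := dVisit M π with hg
  have hγ1 : (0:ℝ) < 1 - M.γ := by linarith [M.γ_lt_one]
  -- key pointwise identity
  have key : ∀ s', f s' - g s' = M.γ * (stepDist M π' (fun s => f s - g s) s'
      + ∑ s, ∑ a, g s * (π' s a - π s a) * M.P s a s') := by
    intro s'
    have hs : stepDist M π' f s' - stepDist M π g s'
        = stepDist M π' (fun s => f s - g s) s'
          + ∑ s, ∑ a, g s * (π' s a - π s a) * M.P s a s' := by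
      unfold stepDist
      rw [← Finset.sum_sub_distrib, ← Finset.sum_add_distrib]
      refine Finset.sum_congr rfl fun s _ => ?_
      rw [← Finset.sum_sub_distrib, ← Finset.sum_add_distrib]
      exact Finset.sum_congr rfl fun a _ => by ring
    rw [← hs, hf, hg, dVisit_fixed M π' hπ' s', dVisit_fixed M π hπ s']
    ring
  -- bound on the perturbation term
  have hE : ∑ s', |∑ s, ∑ a, g s * (π' s a - π s a) * M.P s a s'|
      ≤ 2 * ∑ s, g s * DTV (π' s) (π s) := by
    have h1 : ∑ s', ∑ s, ∑ a, (g s * |π' s a - π s a|) * M.P s a s'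
        = ∑ s, ∑ a, g s * |π' s a - π s a| := sum_step M _
    calc ∑ s', |∑ s, ∑ a, g s * (π' s a - π s a) * M.P s a s'|
        ≤ ∑ s', ∑ s, ∑ a, (g s * |π' s a - π s a|) * M.P s a s' := by
          refine Finset.sum_le_sum fun s' _ => ?_
          refine (Finset.abs_sum_le_sum_abs _ _).trans (Finset.sum_le_sum fun s _ => ?_)
          refine (Finset.abs_sum_le_sum_abs _ _).trans (Finset.sum_le_sum fun a _ => ?_)
          rw [abs_mul, abs_mul, abs_of_nonneg (dVisit_nonneg M π hπ s),
            abs_of_nonneg (M.P_nonneg s a s')]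
      _ = ∑ s, ∑ a, g s * |π' s a - π s a| := h1
      _ = 2 * ∑ s, g s * DTV (π' s) (π s) := by
          rw [Finset.mul_sum]
          refine Finset.sum_congr rfl fun s _ => ?_
          unfold DTV
          rw [← Finset.mul_sum]
          ring
  -- main contraction argument
  set N := ∑ s, |f s - g s| with hN
  have hmain : N ≤ M.γ * N + M.γ * (2 * ∑ s, g s * DTV (π' s) (π s)) := by
    have step1 : N ≤ ∑ s', M.γ * (|stepDist M π' (fun s => f s - g s) s'|
        + |∑ s, ∑ a, g s * (π' s a - π s a) * M.P s a s'|) := by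
      refine Finset.sum_le_sum fun s' _ => ?_
      rw [key s', abs_mul, abs_of_nonneg M.γ_nonneg]
      exact mul_le_mul_of_nonneg_left (abs_add_le _ _) M.γ_nonneg
    refine step1.trans ?_
    rw [← Finset.mul_sum, Finset.sum_add_distrib, mul_add]
    exact add_le_add
      (mul_le_mul_of_nonneg_left (stepDist_l1 M π' hπ' _) M.γ_nonneg)
      (mul_le_mul_of_nonneg_left hE M.γ_nonneg)
  -- conclude
  rw [hN] at hmain
  rw [div_mul_eq_mul_div, le_div_iff₀ hγ1]
  nlinarith [hmain]
end
end

section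
/- KL-regularized off-policy lower bound: for learning policy π_T, behavior policy β_T and any policy π, with ε^π = max_s |E_{a∼π}[A_{π_T}(s,a)]|, J(π) − J(π_T) ≥ (1/(1−γ)) E_{s∼d^{β_T}, a∼β_T(·|s)}[(π(a|s)/β_T(a|s)) A_{π_T}(s,a)] − (2γε^π/(1−γ)^2) sqrt( (1/2) E_{s∼d^{β_T}}[D_KL(β_T(·|s) ‖ π(·|s))] ). -/
open Finset

noncomputable section

variable {S A : Type*} [Fintype S] [Fintype A] [DecidableEq S]

/-!
By the performance-difference identity, `(1 - γ) (J(π) - J(π_T))` is the `d^π`-average of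
`g(s) = E_{a∼π} A_{π_T}(s, a)`. Everything about `d^π` and `V_π` follows from the two
fixed-point equations `d^π = (1 - γ) μ + γ d^π P_π` and `V_π = r_π + γ P_π V_π` for the
row-stochastic matrix `P_π`. Replacing `d^π` by `d^{β_T}` costs at most
`ε ‖d^π - d^{β_T}‖₁` with `ε = max_s |g(s)|`, and subtracting the two stationarity equations
gives `(1 - γ) ‖d^π - d^{β_T}‖₁ ≤ 2 γ E_{d^{β_T}} D_TV(β_T, π)`. Finally Pinsker's inequality
`2 D_TV² ≤ D_KL`, obtained from the pointwise bound `3 (t - 1)² ≤ (2 t + 4) (t log t - t + 1)`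
and Cauchy–Schwarz, together with Jensen bounds the averaged total variation by
`√(E D_KL / 2)`.
-/

section Pinsker

open Real InformationTheory

lemma isMinOn_Ioi_of_hasDerivAt {f f' : ℝ → ℝ} {c : ℝ} (hc : 0 < c)
    (hf : ∀ x ∈ Set.Ioi (0 : ℝ), HasDerivAt f (f' x) x)
    (hf' : ∀ x ∈ Set.Ioi (0 : ℝ), 0 ≤ (x - c) * f' x) : IsMinOn f (Set.Ioi 0) c := by
  intro x (hx : 0 < x)
  have hcont : ∀ a, 0 < a → ∀ b, ContinuousOn f (Set.Icc a b) := fun a ha b y hy =>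
    (hf y (ha.trans_le hy.1)).continuousAt.continuousWithinAt
  rcases le_total c x with hcx | hxc
  · refine monotoneOn_of_hasDerivWithinAt_nonneg (convex_Icc c x) (hcont c hc x)
      (fun y hy => (hf y ?_).hasDerivWithinAt) (fun y hy => ?_) (Set.left_mem_Icc.2 hcx)
      (Set.right_mem_Icc.2 hcx) hcx
    · rw [interior_Icc] at hy; exact hc.trans hy.1
    · rw [interior_Icc] at hy
      exact nonneg_of_mul_nonneg_right (hf' y (hc.trans hy.1)) (sub_pos.2 hy.1)
  · refine antitoneOn_of_hasDerivWithinAt_nonpos (convex_Icc x c) (hcont x hx c)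
      (fun y hy => (hf y ?_).hasDerivWithinAt) (fun y hy => ?_) (Set.left_mem_Icc.2 hxc)
      (Set.right_mem_Icc.2 hxc) hxc
    · rw [interior_Icc] at hy; exact hx.trans hy.1
    · rw [interior_Icc] at hy
      exact nonpos_of_mul_nonneg_right (hf' y (hx.trans hy.1)) (sub_neg.2 hy.2)

lemma sub_one_mul_add_one_mul_log_sub_nonneg {t : ℝ} (ht : 0 < t) :
    0 ≤ (t - 1) * ((t + 1) * log t - 2 * (t - 1)) := by
  have hmono : MonotoneOn (fun t => (t + 1) * log t - 2 * (t - 1)) (Set.Ioi 0) := by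
    refine monotoneOn_of_hasDerivWithinAt_nonneg (f' := fun t => log t + t⁻¹ - 1)
      (convex_Ioi 0) (fun x hx => ?_) (fun x hx => ?_) (fun x hx => ?_)
    · exact ((((hasDerivAt_id x).add_const 1).mul (hasDerivAt_log (ne_of_gt hx))).sub
        (((hasDerivAt_id x).sub_const 1).const_mul 2)).continuousAt.continuousWithinAt
    · rw [interior_Ioi] at hx
      refine ((((hasDerivAt_id x).add_const 1).mul (hasDerivAt_log hx.ne')).sub
        (((hasDerivAt_id x).sub_const 1).const_mul 2)).hasDerivWithinAt.congr_deriv ?_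
      have hx0 : x ≠ 0 := hx.ne'
      simp only [id]
      field_simp
      ring
    · rw [interior_Ioi] at hx
      linarith [one_sub_inv_le_log_of_pos hx]
  have h1 : (1 + 1) * log 1 - 2 * (1 - 1) = (0 : ℝ) := by simp
  rcases le_total 1 t with h | h
  · exact mul_nonneg (sub_nonneg.2 h) (h1 ▸ hmono (Set.mem_Ioi.2 one_pos) ht h)
  · exact mul_nonneg_of_nonpos_of_nonpos (sub_nonpos.2 h)
      (h1 ▸ hmono ht (Set.mem_Ioi.2 one_pos) h)

lemma three_mul_sq_le_mul_klFun {t : ℝ} (ht : 0 < t) :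
    3 * (t - 1) ^ 2 ≤ (2 * t + 4) * klFun t := by
  have hmin : IsMinOn (fun t => (2 * t + 4) * klFun t - 3 * (t - 1) ^ 2) (Set.Ioi 0) 1 := by
    refine isMinOn_Ioi_of_hasDerivAt (f' := fun t => 4 * ((t + 1) * log t - 2 * (t - 1)))
      one_pos (fun x hx => ?_) (fun x hx => ?_)
    · refine ((((hasDerivAt_id x).const_mul 2).add_const 4).mul (hasDerivAt_klFun hx.ne')).sub
        ((((hasDerivAt_id x).sub_const 1).pow 2).const_mul 3) |>.congr_deriv ?_
      simp only [klFun_apply, id]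
      ring
    · linarith [sub_one_mul_add_one_mul_log_sub_nonneg (t := x) hx]
  have := isMinOn_iff.1 hmin t ht
  simp only [klFun_one] at this
  linarith

lemma three_mul_sq_div_le_mul_log_div_sub_add {p q : ℝ} (hp : 0 < p) (hq : 0 < q) :
    3 * (p - q) ^ 2 / (2 * p + 4 * q) ≤ p * log (p / q) - p + q := by
  rw [div_le_iff₀ (by positivity)]
  have hkl : p * log (p / q) - p + q = q * klFun (p / q) := by
    rw [klFun_apply]; field_simp; ring
  have hlhs : 3 * (p - q) ^ 2 = q ^ 2 * (3 * (p / q - 1) ^ 2) := by field_simp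
  have hrhs : (p * log (p / q) - p + q) * (2 * p + 4 * q) =
      q ^ 2 * ((2 * (p / q) + 4) * klFun (p / q)) := by
    rw [hkl]; field_simp
  rw [hlhs, hrhs]
  exact mul_le_mul_of_nonneg_left (three_mul_sq_le_mul_klFun (div_pos hp hq)) (sq_nonneg q)

-- The Cauchy–Schwarz weights `2 p + 4 q` sum to `6`, which produces Pinsker's constant.
lemma two_mul_DTV_sq_le_DKL {p q : A → ℝ} (hp : ∀ a, 0 < p a) (hq : ∀ a, 0 < q a)
    (hp1 : ∑ a, p a = 1) (hq1 : ∑ a, q a = 1) : 2 * DTV p q ^ 2 ≤ DKL p q := by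
  have hw : ∀ a ∈ univ, 0 < 2 * p a + 4 * q a := fun a _ => by linarith [hp a, hq a]
  have hsum : ∑ a, (2 * p a + 4 * q a) = 6 := by
    rw [sum_add_distrib, ← mul_sum, ← mul_sum, hp1, hq1]; norm_num
  have hcs := sq_sum_div_le_sum_sq_div univ (fun a => |p a - q a|) hw
  have hpoint : ∑ a, |p a - q a| ^ 2 / (2 * p a + 4 * q a) ≤ DKL p q / 3 :=
    calc ∑ a, |p a - q a| ^ 2 / (2 * p a + 4 * q a)
        ≤ ∑ a, (p a * log (p a / q a) - p a + q a) / 3 := sum_le_sum fun a _ => by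
          have := three_mul_sq_div_le_mul_log_div_sub_add (hp a) (hq a)
          rw [mul_div_assoc] at this
          rw [sq_abs]
          linarith
      _ = DKL p q / 3 := by
          rw [← sum_div, sum_add_distrib, sum_sub_distrib, hp1, hq1, DKL]; ring
  rw [hsum] at hcs
  unfold DTV
  linarith

lemma sum_mul_DTV_le_sqrt_DKL {ι : Type*} [Fintype ι] {d : ι → ℝ} (hd : ∀ i, 0 ≤ d i)
    (hd1 : ∑ i, d i = 1) {p q : ι → A → ℝ} (hp : ∀ i a, 0 < p i a) (hq : ∀ i a, 0 < q i a)
    (hp1 : ∀ i, ∑ a, p i a = 1) (hq1 : ∀ i, ∑ a, q i a = 1) :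
    ∑ i, d i * DTV (p i) (q i) ≤ √((1 / 2) * ∑ i, d i * DKL (p i) (q i)) := by
  apply le_sqrt_of_sq_le
  have hjensen := (convexOn_pow 2).map_sum_le (t := univ) (fun i _ => hd i) hd1
    (p := fun i => DTV (p i) (q i)) fun i _ => Set.mem_Ici.2 <| by unfold DTV; positivity
  simp only [smul_eq_mul] at hjensen
  calc (∑ i, d i * DTV (p i) (q i)) ^ 2 ≤ ∑ i, d i * DTV (p i) (q i) ^ 2 := hjensen
    _ ≤ ∑ i, d i * ((1 / 2) * DKL (p i) (q i)) := sum_le_sum fun i _ =>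
        mul_le_mul_of_nonneg_left (by
          linarith [two_mul_DTV_sq_le_DKL (hp i) (hq i) (hp1 i) (hq1 i)]) (hd i)
    _ = (1 / 2) * ∑ i, d i * DKL (p i) (q i) := by
        rw [mul_sum]; exact sum_congr rfl fun i _ => mul_left_comm _ _ _

end Pinsker

lemma summable_pow_mul_of_abs_le {γ C : ℝ} (hγ0 : 0 ≤ γ) (hγ1 : γ < 1) {f : ℕ → ℝ}
    (hf : ∀ t, |f t| ≤ C) : Summable fun t => γ ^ t * f t :=
  ((summable_geometric_of_lt_one hγ0 hγ1).mul_right C).of_norm_bounded fun t => by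
    rw [Real.norm_eq_abs, abs_mul, abs_pow, abs_of_nonneg hγ0]
    exact mul_le_mul_of_nonneg_left (hf t) (pow_nonneg hγ0 t)

namespace Matrix

variable {n : Type*} [Fintype n] [DecidableEq n] {P : Matrix n n ℝ}

lemma abs_mulVec_le_of_mem_rowStochastic (hP : P ∈ rowStochastic ℝ n) (v : n → ℝ) (i : n) :
    |(P *ᵥ v) i| ≤ ∑ j, |v j| :=
  (abs_sum_le_sum_abs _ _).trans <| sum_le_sum fun j _ => by
    rw [abs_mul, abs_of_nonneg (nonneg_of_mem_rowStochastic hP)]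
    exact mul_le_of_le_one_left (abs_nonneg _) (le_one_of_mem_rowStochastic hP)

lemma abs_vecMul_le_of_mem_rowStochastic (hP : P ∈ rowStochastic ℝ n) (x : n → ℝ) (j : n) :
    |(x ᵥ* P) j| ≤ ∑ i, |x i| :=
  (abs_sum_le_sum_abs _ _).trans <| sum_le_sum fun i _ => by
    rw [abs_mul, abs_of_nonneg (nonneg_of_mem_rowStochastic hP)]
    exact mul_le_of_le_one_right (abs_nonneg _) (le_one_of_mem_rowStochastic hP)

lemma sum_abs_vecMul_le_of_mem_rowStochastic (hP : P ∈ rowStochastic ℝ n) (x : n → ℝ) :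
    ∑ j, |(x ᵥ* P) j| ≤ ∑ i, |x i| :=
  calc ∑ j, |(x ᵥ* P) j| ≤ ∑ j, ∑ i, |x i| * P i j :=
        sum_le_sum fun j _ => (abs_sum_le_sum_abs _ _).trans_eq <| sum_congr rfl fun i _ => by
          rw [abs_mul, abs_of_nonneg (nonneg_of_mem_rowStochastic hP)]
    _ = ∑ i, |x i| := by
        rw [sum_comm]
        simp_rw [← mul_sum, sum_row_of_mem_rowStochastic hP, mul_one]

lemma sum_vecMul_of_mem_rowStochastic (hP : P ∈ rowStochastic ℝ n) (x : n → ℝ) :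
    ∑ j, (x ᵥ* P) j = ∑ i, x i := by
  simp_rw [← dotProduct_one, ← dotProduct_mulVec, one_vecMul_of_mem_rowStochastic hP]

lemma summable_pow_mul_pow_mulVec (hP : P ∈ rowStochastic ℝ n) {γ : ℝ} (hγ0 : 0 ≤ γ)
    (hγ1 : γ < 1) (v : n → ℝ) (i : n) : Summable fun t => γ ^ t * (P ^ t *ᵥ v) i :=
  summable_pow_mul_of_abs_le hγ0 hγ1 fun t =>
    abs_mulVec_le_of_mem_rowStochastic (pow_mem hP t) v i

lemma summable_pow_mul_vecMul_pow (hP : P ∈ rowStochastic ℝ n) {γ : ℝ} (hγ0 : 0 ≤ γ)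
    (hγ1 : γ < 1) (x : n → ℝ) (j : n) : Summable fun t => γ ^ t * (x ᵥ* P ^ t) j :=
  summable_pow_mul_of_abs_le hγ0 hγ1 fun t =>
    abs_vecMul_le_of_mem_rowStochastic (pow_mem hP t) x j

lemma tsum_pow_mul_pow_mulVec_eq (hP : P ∈ rowStochastic ℝ n) {γ : ℝ} (hγ0 : 0 ≤ γ)
    (hγ1 : γ < 1) (v : n → ℝ) :
    (fun i => ∑' t, γ ^ t * (P ^ t *ᵥ v) i) =
      v + γ • (P *ᵥ fun i => ∑' t, γ ^ t * (P ^ t *ᵥ v) i) := by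
  have hsum := summable_pow_mul_pow_mulVec hP hγ0 hγ1 v
  have hrow : ∀ w i, (P *ᵥ w) i = ∑ j, P i j * w j := fun _ _ => rfl
  ext i
  rw [(hsum i).tsum_eq_zero_add, Pi.add_apply, Pi.smul_apply, smul_eq_mul, hrow, mul_sum]
  simp_rw [← tsum_mul_left]
  rw [← Summable.tsum_finsetSum fun j _ => ((hsum j).mul_left _).mul_left γ]
  congr 1
  · simp
  · refine tsum_congr fun t => ?_
    rw [pow_succ' γ, pow_succ' P, ← mulVec_mulVec, hrow, mul_sum]
    exact sum_congr rfl fun j _ => by ring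

lemma tsum_pow_mul_vecMul_pow_eq (hP : P ∈ rowStochastic ℝ n) {γ : ℝ} (hγ0 : 0 ≤ γ)
    (hγ1 : γ < 1) (x : n → ℝ) :
    (fun j => ∑' t, γ ^ t * (x ᵥ* P ^ t) j) =
      x + γ • ((fun j => ∑' t, γ ^ t * (x ᵥ* P ^ t) j) ᵥ* P) := by
  have hsum := summable_pow_mul_vecMul_pow hP hγ0 hγ1 x
  have hcol : ∀ w j, (w ᵥ* P) j = ∑ i, w i * P i j := fun _ _ => rfl
  ext j
  rw [(hsum j).tsum_eq_zero_add, Pi.add_apply, Pi.smul_apply, smul_eq_mul, hcol, mul_sum]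
  simp_rw [← tsum_mul_right, ← tsum_mul_left]
  rw [← Summable.tsum_finsetSum fun i _ => ((hsum i).mul_right _).mul_left γ]
  congr 1
  · simp
  · refine tsum_congr fun t => ?_
    rw [pow_succ' γ, pow_succ P, ← vecMul_vecMul, hcol, mul_sum]
    exact sum_congr rfl fun i _ => by ring

end Matrix

open Matrix

namespace FinMDP

section

variable {S A : Type*} [Fintype S] [Fintype A] (M : FinMDP S A)

def transMatrix (π : S → A → ℝ) : Matrix S S ℝ := fun s s' => ∑ a, π s a * M.P s a s'

def expReward (π : S → A → ℝ) (s : S) : ℝ := ∑ a, π s a * M.r s a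

variable {M} {π : S → A → ℝ}

lemma stepDist_eq_vecMul (d : S → ℝ) : stepDist M π d = d ᵥ* M.transMatrix π := by
  ext s'
  simp only [stepDist, vecMul_apply_eq_sum, transMatrix, mul_sum, mul_assoc]

lemma sum_abs_vecMul_transMatrix_sub_le (β : S → A → ℝ) (x : S → ℝ) :
    ∑ s', |(x ᵥ* (M.transMatrix π - M.transMatrix β)) s'| ≤
      ∑ s, |x s| * ∑ a, |π s a - β s a| :=
  calc ∑ s', |(x ᵥ* (M.transMatrix π - M.transMatrix β)) s'|
      ≤ ∑ s', ∑ s, ∑ a, |x s| * |π s a - β s a| * M.P s a s' := by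
        refine sum_le_sum fun s' _ => (abs_sum_le_sum_abs _ _).trans <| sum_le_sum fun s _ => ?_
        have hsub : (M.transMatrix π - M.transMatrix β) s s' =
            ∑ a, (π s a - β s a) * M.P s a s' := by
          simp only [Matrix.sub_apply, transMatrix, ← sum_sub_distrib, sub_mul]
        beta_reduce
        rw [hsub, mul_sum]
        refine (abs_sum_le_sum_abs _ _).trans_eq <| sum_congr rfl fun a _ => ?_
        rw [abs_mul, abs_mul, abs_of_nonneg (M.P_nonneg s a s'), mul_assoc]
    _ = ∑ s, |x s| * ∑ a, |π s a - β s a| := by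
        rw [sum_comm]
        refine sum_congr rfl fun s _ => ?_
        rw [sum_comm]
        simp only [← mul_sum, M.P_sum, mul_one]

end

variable {M : FinMDP S A} {π : S → A → ℝ}

lemma transMatrix_mem_rowStochastic (hπ : IsPolicy π) :
    M.transMatrix π ∈ rowStochastic ℝ S := by
  refine mem_rowStochastic_iff_sum.2 ⟨fun s s' => ?_, fun s => ?_⟩
  · exact sum_nonneg fun a _ => mul_nonneg (hπ.1 s a) (M.P_nonneg s a s')
  · simp only [transMatrix]
    rw [sum_comm]
    simp_rw [← mul_sum, M.P_sum, mul_one, hπ.2 s]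

lemma stateDist_eq_vecMul_pow (t : ℕ) : stateDist M π t = M.μ ᵥ* M.transMatrix π ^ t := by
  induction t with
  | zero => simp [stateDist]
  | succ t ih => rw [stateDist, stepDist_eq_vecMul, ih, vecMul_vecMul, pow_succ]

lemma stateDistFrom_eq_pow_apply (s₀ : S) (t : ℕ) :
    stateDistFrom M π s₀ t = (M.transMatrix π ^ t) s₀ := by
  induction t with
  | zero => ext s; simp [stateDistFrom, one_apply, eq_comm]
  | succ t ih => rw [stateDistFrom, stepDist_eq_vecMul, ih, pow_succ, mul_apply_eq_vecMul]

lemma Vval_eq_tsum :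
    Vval M π = fun s => ∑' t, M.γ ^ t * (M.transMatrix π ^ t *ᵥ M.expReward π) s := by
  ext s
  simp only [Vval, stateDistFrom_eq_pow_apply]
  rfl

lemma dVisit_eq_tsum :
    dVisit M π = (1 - M.γ) • fun s => ∑' t, M.γ ^ t * (M.μ ᵥ* M.transMatrix π ^ t) s := by
  ext s
  simp only [dVisit, stateDist_eq_vecMul_pow]
  rfl

lemma Vval_bellman (hπ : IsPolicy π) :
    Vval M π = M.expReward π + M.γ • (M.transMatrix π *ᵥ Vval M π) := by
  rw [Vval_eq_tsum]
  exact tsum_pow_mul_pow_mulVec_eq (transMatrix_mem_rowStochastic hπ) M.γ_nonneg M.γ_lt_one _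

lemma dVisit_stationary (hπ : IsPolicy π) :
    dVisit M π = (1 - M.γ) • M.μ + M.γ • (dVisit M π ᵥ* M.transMatrix π) := by
  rw [dVisit_eq_tsum, smul_vecMul, smul_comm, ← smul_add]
  congr 1
  exact tsum_pow_mul_vecMul_pow_eq (transMatrix_mem_rowStochastic hπ) M.γ_nonneg M.γ_lt_one _

lemma Jret_eq_dotProduct_Vval (hπ : IsPolicy π) : Jret M π = M.μ ⬝ᵥ Vval M π := by
  have hsum := summable_pow_mul_pow_mulVec (transMatrix_mem_rowStochastic (M := M) hπ)
    M.γ_nonneg M.γ_lt_one (M.expReward π)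
  rw [Vval_eq_tsum]
  simp only [dotProduct]
  simp_rw [← tsum_mul_left]
  rw [← Summable.tsum_finsetSum fun s _ => (hsum s).mul_left _]
  refine tsum_congr fun t => ?_
  change M.γ ^ t * (stateDist M π t ⬝ᵥ M.expReward π) = _
  rw [stateDist_eq_vecMul_pow, ← dotProduct_mulVec, dotProduct, mul_sum]
  exact sum_congr rfl fun s _ => mul_left_comm _ _ _

lemma dVisit_nonneg (hπ : IsPolicy π) (s : S) : 0 ≤ dVisit M π s :=
  mul_nonneg (sub_nonneg.2 M.γ_lt_one.le) <| tsum_nonneg fun t => by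
    rw [stateDist_eq_vecMul_pow]
    exact mul_nonneg (pow_nonneg M.γ_nonneg t) <| nonneg_vecMul_of_mem_rowStochastic
      (pow_mem (transMatrix_mem_rowStochastic hπ) t) M.μ_nonneg s

lemma sum_dVisit (hπ : IsPolicy π) : ∑ s, dVisit M π s = 1 := by
  have h := congrArg (fun d => ∑ s, d s) (dVisit_stationary (M := M) hπ)
  simp only [Pi.add_apply, Pi.smul_apply, smul_eq_mul, sum_add_distrib, ← mul_sum, M.μ_sum,
    sum_vecMul_of_mem_rowStochastic (transMatrix_mem_rowStochastic hπ)] at h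
  have hγ : M.γ < 1 := M.γ_lt_one
  nlinarith

lemma dVisit_dotProduct_sub_smul_mulVec (hπ : IsPolicy π) (W : S → ℝ) :
    dVisit M π ⬝ᵥ (W - M.γ • (M.transMatrix π *ᵥ W)) = (1 - M.γ) * (M.μ ⬝ᵥ W) := by
  have h := congrArg (· ⬝ᵥ W) (dVisit_stationary (M := M) hπ)
  simp only [add_dotProduct, smul_dotProduct, smul_eq_mul] at h
  rw [dotProduct_sub, dotProduct_smul, dotProduct_mulVec, smul_eq_mul]
  linarith

lemma sum_mul_Adv (πT : S → A → ℝ) (hπ : IsPolicy π) :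
    (fun s => ∑ a, π s a * Adv M πT s a) =
      M.expReward π + M.γ • (M.transMatrix π *ᵥ Vval M πT) - Vval M πT := by
  ext s
  have hPV : (M.transMatrix π *ᵥ Vval M πT) s =
      ∑ a, π s a * ∑ s', M.P s a s' * Vval M πT s' := by
    simp only [mulVec, dotProduct, transMatrix, sum_mul, mul_sum]
    rw [sum_comm]
    exact sum_congr rfl fun a _ => sum_congr rfl fun s' _ => mul_assoc _ _ _
  simp only [Adv, Qval, Pi.add_apply, Pi.sub_apply, Pi.smul_apply, smul_eq_mul, hPV, expReward,
    mul_sub, mul_add, sum_sub_distrib, sum_add_distrib, ← sum_mul, hπ.2 s, one_mul, mul_sum]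
  congr 2
  exact sum_congr rfl fun a _ => sum_congr rfl fun s' _ => by ring

theorem performance_difference {πT : S → A → ℝ} (hπ : IsPolicy π) (hπT : IsPolicy πT) :
    (1 - M.γ) * (Jret M π - Jret M πT) = dVisit M π ⬝ᵥ fun s => ∑ a, π s a * Adv M πT s a := by
  have hr : M.expReward π = Vval M π - M.γ • (M.transMatrix π *ᵥ Vval M π) :=
    eq_sub_of_add_eq (Vval_bellman hπ).symm
  rw [sum_mul_Adv πT hπ, hr,
    show ∀ a b c e : S → ℝ, a - b + c - e = (a - b) - (e - c) from fun _ _ _ _ => by abel,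
    dotProduct_sub, dVisit_dotProduct_sub_smul_mulVec hπ, dVisit_dotProduct_sub_smul_mulVec hπ,
    Jret_eq_dotProduct_Vval hπ, Jret_eq_dotProduct_Vval hπT]
  ring

lemma sum_abs_dVisit_sub_le {β : S → A → ℝ} (hπ : IsPolicy π) (hβ : IsPolicy β) :
    (1 - M.γ) * ∑ s, |dVisit M π s - dVisit M β s| ≤
      2 * M.γ * ∑ s, dVisit M β s * DTV (β s) (π s) := by
  set Δ := dVisit M π - dVisit M β with hΔdef
  have hΔ : Δ = M.γ •
      (Δ ᵥ* M.transMatrix π + dVisit M β ᵥ* (M.transMatrix π - M.transMatrix β)) := by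
    conv_lhs => rw [hΔdef, dVisit_stationary hπ, dVisit_stationary hβ]
    rw [sub_vecMul, vecMul_sub]
    module
  have hbound : ∑ s, |Δ s| ≤
      M.γ * (∑ s, |Δ s| + ∑ s, dVisit M β s * ∑ a, |π s a - β s a|) := by
    conv_lhs => rw [hΔ]
    simp only [Pi.smul_apply, Pi.add_apply, smul_eq_mul, abs_mul, abs_of_nonneg M.γ_nonneg,
      ← mul_sum]
    refine mul_le_mul_of_nonneg_left ?_ M.γ_nonneg
    refine (sum_le_sum fun s _ => abs_add_le _ _).trans ?_
    rw [sum_add_distrib]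
    refine add_le_add (sum_abs_vecMul_le_of_mem_rowStochastic
      (transMatrix_mem_rowStochastic hπ) Δ) ?_
    refine (sum_abs_vecMul_transMatrix_sub_le β _).trans_eq ?_
    simp_rw [abs_of_nonneg (dVisit_nonneg hβ _)]
  have hDTV : ∀ s, ∑ a, |π s a - β s a| = 2 * DTV (β s) (π s) := fun s => by
    simp only [DTV, abs_sub_comm (π s _)]; ring
  simp only [hDTV, mul_left_comm _ (2 : ℝ), ← mul_sum] at hbound
  change (1 - M.γ) * ∑ s, |Δ s| ≤ _
  linarith

theorem Jret_sub_Jret_ge_sub_DTV [Nonempty S] {πT β π : S → A → ℝ} (hπT : IsPolicy πT)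
    (hβ : IsPolicy β) (hπ : IsPolicy π) {ε : ℝ}
    (hε : ∀ s, |∑ a, π s a * Adv M πT s a| ≤ ε) :
    Jret M π - Jret M πT ≥
      (1 / (1 - M.γ)) * ∑ s, dVisit M β s * ∑ a, π s a * Adv M πT s a
        - 2 * M.γ * ε / (1 - M.γ) ^ 2 * ∑ s, dVisit M β s * DTV (β s) (π s) := by
  set g := fun s => ∑ a, π s a * Adv M πT s a with hg
  change _ ≥ 1 / (1 - M.γ) * (dVisit M β ⬝ᵥ g) - _
  have h1γ : 0 < 1 - M.γ := sub_pos.2 M.γ_lt_one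
  have hε0 : 0 ≤ ε := (abs_nonneg _).trans (hε (Classical.arbitrary S))
  have hshift : |(dVisit M π - dVisit M β) ⬝ᵥ g| ≤ ε * ∑ s, |dVisit M π s - dVisit M β s| :=
    (abs_sum_le_sum_abs _ _).trans <| by
      rw [mul_sum]
      exact sum_le_sum fun s _ => by
        rw [abs_mul, mul_comm ε]; exact mul_le_mul_of_nonneg_left (hε s) (abs_nonneg _)
  have hεvisit : ε * ∑ s, |dVisit M π s - dVisit M β s| ≤
      2 * M.γ * ε / (1 - M.γ) * ∑ s, dVisit M β s * DTV (β s) (π s) := by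
    rw [div_mul_eq_mul_div, le_div_iff₀ h1γ]
    nlinarith [mul_le_mul_of_nonneg_left (sum_abs_dVisit_sub_le (M := M) hπ hβ) hε0]
  have hpd := performance_difference (M := M) hπ hπT
  rw [← hg, show dVisit M π = dVisit M β + (dVisit M π - dVisit M β) by abel,
    add_dotProduct] at hpd
  have hlhs : (1 - M.γ) * ((1 / (1 - M.γ)) * (dVisit M β ⬝ᵥ g)
      - 2 * M.γ * ε / (1 - M.γ) ^ 2 * ∑ s, dVisit M β s * DTV (β s) (π s)) =
      dVisit M β ⬝ᵥ g - 2 * M.γ * ε / (1 - M.γ) * ∑ s, dVisit M β s * DTV (β s) (π s) := by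
    field_simp
  rw [ge_iff_le, ← mul_le_mul_iff_of_pos_left h1γ, hpd, hlhs]
  linarith [neg_abs_le ((dVisit M π - dVisit M β) ⬝ᵥ g)]

end FinMDP

/-- KL-regularized off-policy lower bound (advantage realignment + Pinsker–Jensen). -/
theorem kl_regularized_offpolicy_lower_bound [Nonempty S] (M : FinMDP S A)
    (πT βT π : S → A → ℝ)
    (hπT : IsPolicy πT) (hβT : IsPolicy βT) (hπ : IsPolicy π)
    (hβpos : ∀ s a, 0 < βT s a) (hπpos : ∀ s a, 0 < βT s a → 0 < π s a) :
    Jret M π - Jret M πT ≥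
      (1 / (1 - M.γ)) * (∑ s, dVisit M βT s * ∑ a, βT s a *
          (π s a / βT s a * Adv M πT s a))
        - 2 * M.γ * (univ.sup' univ_nonempty fun s' => |∑ b, π s' b * Adv M πT s' b|)
            / (1 - M.γ) ^ 2 *
          Real.sqrt ((1 / 2) * ∑ s, dVisit M βT s * DKL (βT s) (π s)) := by
  set ε := univ.sup' univ_nonempty fun s' => |∑ b, π s' b * Adv M πT s' b|
  have hε : ∀ s, |∑ a, π s a * Adv M πT s a| ≤ ε := fun s =>
    le_sup' (fun s' => |∑ b, π s' b * Adv M πT s' b|) (mem_univ s)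
  have hrealign : ∀ s, ∑ a, βT s a * (π s a / βT s a * Adv M πT s a) =
      ∑ a, π s a * Adv M πT s a := fun s =>
    sum_congr rfl fun a _ => by field_simp [(hβpos s a).ne']
  have hpinsker := sum_mul_DTV_le_sqrt_DKL (FinMDP.dVisit_nonneg (M := M) hβT)
    (FinMDP.sum_dVisit hβT) hβpos (fun s a => hπpos s a (hβpos s a)) hβT.2 hπ.2
  have hcoeff : 0 ≤ 2 * M.γ * ε / (1 - M.γ) ^ 2 := by
    have := (abs_nonneg _).trans (hε (Classical.arbitrary S))
    have := M.γ_nonneg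
    positivity
  simp_rw [hrealign]
  exact (FinMDP.Jret_sub_Jret_ge_sub_DTV hπT hβT hπ hε).trans'
    (sub_le_sub_left (mul_le_mul_of_nonneg_left hpinsker hcoeff) _)
end
end
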